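/- Diagonalized quadratic-form identity on the core (identity (eq:quadratic.form.final)): Let ω ∈ (0,π), k ∈ ℤ and α := k + 1/2. Then for every ψ = (ψ₁,ψ₂,ψ₃,ψ₄) ∈ M one has ‖(T_k − 1/2)ψ‖²_{L²((0,ω);ℂ⁴)} = ∫₀^ω ( |ψ₁'|² + |ψ₂'|² + |ψ₃'|² + |ψ₄'|² ) dθ + ∫₀^ω α(α−1)/sin²θ · (|ψ₁|² + |ψ₃|²) dθ + ∫₀^ω α(α+1)/sin²θ · (|ψ₂|² + |ψ₄|²) dθ. -/

import Mathlib

open MeasureTheory Real Set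

noncomputable section

/-- First component of the fiber differential expression `τ_k` applied to a pair `(f,g)`:
`(k+1) f − g' − (k+1/2) cot θ · g`. -/
def tauFst (k : ℤ) (f g : ℝ → ℂ) (θ : ℝ) : ℂ :=
  ((k : ℂ) + 1) * f θ - deriv g θ
    - ((k : ℂ) + 1 / 2) * ((Real.cos θ / Real.sin θ : ℝ) : ℂ) * g θ

/-- Second component of the fiber differential expression `τ_k` applied to a pair `(f,g)`:
`f' − (k+1/2) cot θ · f − k g`. -/
def tauSnd (k : ℤ) (f g : ℝ → ℂ) (θ : ℝ) : ℂ :=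
  deriv f θ - ((k : ℂ) + 1 / 2) * ((Real.cos θ / Real.sin θ : ℝ) : ℂ) * f θ
    - (k : ℂ) * g θ

/-- The core `M` of the fiber operator `T_k`: smooth `ℂ⁴`-valued functions
`ψ = (ψ₁,ψ₂,ψ₃,ψ₄)` on `(0,ω]` with compact support in `(0,ω]` satisfying the boundary
condition `(ψ₁(ω), ψ₂(ω))ᵀ = A_ω (ψ₃(ω), ψ₄(ω))ᵀ` with
`A_ω = [[i sin ω, −i cos ω], [−i cos ω, −i sin ω]]`. -/
def InCore (ω : ℝ) (ψ₁ ψ₂ ψ₃ ψ₄ : ℝ → ℂ) : Prop :=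
  ContDiffOn ℝ (⊤ : ℕ∞) ψ₁ (Ioc 0 ω) ∧ ContDiffOn ℝ (⊤ : ℕ∞) ψ₂ (Ioc 0 ω)
    ∧ ContDiffOn ℝ (⊤ : ℕ∞) ψ₃ (Ioc 0 ω) ∧ ContDiffOn ℝ (⊤ : ℕ∞) ψ₄ (Ioc 0 ω)
    ∧ IsCompact (tsupport ψ₁) ∧ tsupport ψ₁ ⊆ Ioc 0 ω
    ∧ IsCompact (tsupport ψ₂) ∧ tsupport ψ₂ ⊆ Ioc 0 ω
    ∧ IsCompact (tsupport ψ₃) ∧ tsupport ψ₃ ⊆ Ioc 0 ω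
    ∧ IsCompact (tsupport ψ₄) ∧ tsupport ψ₄ ⊆ Ioc 0 ω
    ∧ ψ₁ ω = Complex.I * (Real.sin ω : ℂ) * ψ₃ ω - Complex.I * (Real.cos ω : ℂ) * ψ₄ ω
    ∧ ψ₂ ω = -Complex.I * (Real.cos ω : ℂ) * ψ₃ ω - Complex.I * (Real.sin ω : ℂ) * ψ₄ ω

namespace DQF

/-- The boundary functional of a pair. -/
def Fb (α : ℝ) (f g : ℝ → ℂ) (θ : ℝ) : ℝ :=
  α * (Real.cos θ / Real.sin θ) * (‖g θ‖ ^ 2 - ‖f θ‖ ^ 2)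
    - 2 * α * ((starRingEnd ℂ) (f θ) * g θ).re

lemma norm_sq_eq' (z : ℂ) : ‖z‖ ^ 2 = z.re ^ 2 + z.im ^ 2 := by
  rw [← Complex.normSq_eq_norm_sq, Complex.normSq_apply]; ring

/-- Division-free pointwise algebraic identity for one pair. -/
lemma alg_pair (α t u : ℝ) (hu : 1 + t ^ 2 = u) (f g f' g' : ℂ) :
    ‖(α : ℂ) * f - g' - (α : ℂ) * (t : ℂ) * g‖ ^ 2
      + ‖f' - (α : ℂ) * (t : ℂ) * f - (α : ℂ) * g‖ ^ 2
  = ‖f'‖ ^ 2 + ‖g'‖ ^ 2 + (α * (α - 1) * u) * ‖f‖ ^ 2 + (α * (α + 1) * u) * ‖g‖ ^ 2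
    + (α * ((-u) * (‖g‖ ^ 2 - ‖f‖ ^ 2)
          + t * (2 * ((starRingEnd ℂ) g * g').re - 2 * ((starRingEnd ℂ) f * f').re))
       - 2 * α * (((starRingEnd ℂ) f' * g).re + ((starRingEnd ℂ) f * g').re)) := by
  subst hu
  simp only [norm_sq_eq', Complex.mul_re, Complex.mul_im, Complex.sub_re, Complex.sub_im,
    Complex.ofReal_re, Complex.ofReal_im, Complex.conj_re, Complex.conj_im]
  ring

/-- The boundary terms cancel thanks to the boundary condition. -/
lemma boundary_zero (s c : ℝ) (h1 : c ^ 2 + s ^ 2 = 1) (u v p q : ℂ)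
    (hp : p = Complex.I * (s : ℂ) * u - Complex.I * (c : ℂ) * v)
    (hq : q = -Complex.I * (c : ℂ) * u - Complex.I * (s : ℂ) * v) :
    c * ((‖q‖ ^ 2 - ‖p‖ ^ 2) + (‖v‖ ^ 2 - ‖u‖ ^ 2))
      - 2 * s * (((starRingEnd ℂ) p * q).re + ((starRingEnd ℂ) u * v).re) = 0 := by
  subst hp hq
  simp only [norm_sq_eq', Complex.mul_re, Complex.mul_im, Complex.sub_re, Complex.sub_im,
    Complex.neg_re, Complex.neg_im, Complex.I_re, Complex.I_im,
    Complex.ofReal_re, Complex.ofReal_im, Complex.conj_re, Complex.conj_im]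
  linear_combination (c * (u.re ^ 2 + u.im ^ 2 - v.re ^ 2 - v.im ^ 2)
    + 2 * s * (u.re * v.re + u.im * v.im)) * h1

lemma hasDerivAt_conj (f : ℝ → ℂ) (f' : ℂ) (x : ℝ) (hf : HasDerivAt f f' x) :
    HasDerivAt (fun θ => (starRingEnd ℂ) (f θ)) ((starRingEnd ℂ) f') x := by
  simp only [starRingEnd_apply]; exact hf.star

lemma hasDerivAt_re (h : ℝ → ℂ) (h' : ℂ) (x : ℝ) (hh : HasDerivAt h h' x) :
    HasDerivAt (fun θ => (h θ).re) h'.re x :=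
  Complex.reCLM.hasFDerivAt.comp_hasDerivAt x hh.hasFDerivAt

lemma hasDerivAt_conj_mul_re (f g : ℝ → ℂ) (f' g' : ℂ) (x : ℝ)
    (hf : HasDerivAt f f' x) (hg : HasDerivAt g g' x) :
    HasDerivAt (fun θ => ((starRingEnd ℂ) (f θ) * g θ).re)
      (((starRingEnd ℂ) f' * g x).re + ((starRingEnd ℂ) (f x) * g').re) x := by
  have h1 := (hasDerivAt_conj f f' x hf).mul hg
  have h2 := hasDerivAt_re _ _ x h1
  simpa using h2

lemma hasDerivAt_normSq (f : ℝ → ℂ) (f' : ℂ) (x : ℝ) (hf : HasDerivAt f f' x) :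
    HasDerivAt (fun θ => ‖f θ‖ ^ 2) (2 * ((starRingEnd ℂ) (f x) * f').re) x := by
  have h2 := hasDerivAt_conj_mul_re f f f' f' x hf hf
  have heq : (fun θ => ((starRingEnd ℂ) (f θ) * f θ).re) = fun θ => ‖f θ‖ ^ 2 := by
    funext θ
    rw [norm_sq_eq']
    simp only [Complex.mul_re, Complex.conj_re, Complex.conj_im]
    ring
  rw [heq] at h2
  convert h2 using 1
  simp only [Complex.mul_re, Complex.conj_re, Complex.conj_im]
  ring

lemma hasDerivAt_cot (x : ℝ) (hs : Real.sin x ≠ 0) :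
    HasDerivAt (fun θ => Real.cos θ / Real.sin θ) (-(1 / Real.sin x ^ 2)) x := by
  have h := (Real.hasDerivAt_cos x).div (Real.hasDerivAt_sin x) hs
  refine h.congr_deriv ?_
  symm
  rw [eq_div_iff (pow_ne_zero 2 hs), neg_mul, one_div, inv_mul_cancel₀ (pow_ne_zero 2 hs)]
  nlinarith [Real.sin_sq_add_cos_sq x]

lemma hasDerivAt_Fb (α : ℝ) (f g : ℝ → ℂ) (f' g' : ℂ) (x : ℝ) (hs : Real.sin x ≠ 0)
    (hf : HasDerivAt f f' x) (hg : HasDerivAt g g' x) :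
    HasDerivAt (Fb α f g)
      (α * ((-(1 / Real.sin x ^ 2)) * (‖g x‖ ^ 2 - ‖f x‖ ^ 2)
          + (Real.cos x / Real.sin x)
            * (2 * ((starRingEnd ℂ) (g x) * g').re - 2 * ((starRingEnd ℂ) (f x) * f').re))
        - 2 * α * (((starRingEnd ℂ) f' * g x).re + ((starRingEnd ℂ) (f x) * g').re)) x := by
  have h1 : HasDerivAt (fun θ => (Real.cos θ / Real.sin θ) * (‖g θ‖ ^ 2 - ‖f θ‖ ^ 2))
      ((-(1 / Real.sin x ^ 2)) * (‖g x‖ ^ 2 - ‖f x‖ ^ 2)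
        + (Real.cos x / Real.sin x)
          * (2 * ((starRingEnd ℂ) (g x) * g').re - 2 * ((starRingEnd ℂ) (f x) * f').re)) x :=
    (hasDerivAt_cot x hs).mul ((hasDerivAt_normSq g g' x hg).sub (hasDerivAt_normSq f f' x hf))
  have h2 := hasDerivAt_conj_mul_re f g f' g' x hf hg
  have := (h1.const_mul α).sub ((h2.const_mul (2 * α)))
  have heq : (fun x => α * (Real.cos x / Real.sin x * (‖g x‖ ^ 2 - ‖f x‖ ^ 2))
      - 2 * α * ((starRingEnd ℂ) (f x) * g x).re) = Fb α f g := by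
    funext y; simp only [Fb]; ring
  rw [← heq]
  exact this

/-- Pointwise identity: the quadratic form density minus its diagonal part is
the derivative of the boundary functional `Fb`. -/
lemma pair_deriv (k : ℤ) (f g : ℝ → ℂ) (x : ℝ) (hs : Real.sin x ≠ 0)
    (hf : HasDerivAt f (deriv f x) x) (hg : HasDerivAt g (deriv g x) x) :
    HasDerivAt (Fb ((k : ℝ) + 1 / 2) f g)
      ((‖tauFst k f g x - (1 / 2) * f x‖ ^ 2 + ‖tauSnd k f g x - (1 / 2) * g x‖ ^ 2)
        - (‖deriv f x‖ ^ 2 + ‖deriv g x‖ ^ 2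
           + ((k : ℝ) + 1 / 2) * (((k : ℝ) + 1 / 2) - 1) / Real.sin x ^ 2 * ‖f x‖ ^ 2
           + ((k : ℝ) + 1 / 2) * (((k : ℝ) + 1 / 2) + 1) / Real.sin x ^ 2 * ‖g x‖ ^ 2)) x := by
  set α : ℝ := (k : ℝ) + 1 / 2 with hα
  set t : ℝ := Real.cos x / Real.sin x with ht
  have hu : 1 + t ^ 2 = 1 / Real.sin x ^ 2 := by
    rw [ht]
    field_simp
    exact Real.sin_sq_add_cos_sq x
  have h := hasDerivAt_Fb α f g (deriv f x) (deriv g x) x hs hf hg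
  convert h using 1
  have e1 : tauFst k f g x - (1 / 2) * f x
      = (α : ℂ) * f x - deriv g x - (α : ℂ) * (t : ℂ) * g x := by
    simp only [tauFst, hα, ht]
    push_cast
    ring
  have e2 : tauSnd k f g x - (1 / 2) * g x
      = deriv f x - (α : ℂ) * (t : ℂ) * f x - (α : ℂ) * g x := by
    simp only [tauSnd, hα, ht]
    push_cast
    ring
  rw [e1, e2, alg_pair α t (1 / Real.sin x ^ 2) hu (f x) (g x) (deriv f x) (deriv g x)]
  rw [ht]
  ring

end DQF

open DQF

set_option maxHeartbeats 2000000 in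
/-- Diagonalized quadratic-form identity on the core (identity (eq:quadratic.form.final)):
for `α = k + 1/2` and every `ψ ∈ M`,
`‖(T_k − 1/2)ψ‖² = ∫ ∑|ψᵢ'|² + ∫ α(α−1)(|ψ₁|²+|ψ₃|²)/sin²θ + ∫ α(α+1)(|ψ₂|²+|ψ₄|²)/sin²θ`. -/
theorem diagonalized_quadratic_form_identity (ω : ℝ) (hω : ω ∈ Ioo 0 π) (k : ℤ)
    (ψ₁ ψ₂ ψ₃ ψ₄ : ℝ → ℂ) (hψ : InCore ω ψ₁ ψ₂ ψ₃ ψ₄) :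
    (∫ θ in Ioo 0 ω,
        (‖tauFst k ψ₁ ψ₂ θ - (1 / 2) * ψ₁ θ‖ ^ 2
          + ‖tauSnd k ψ₁ ψ₂ θ - (1 / 2) * ψ₂ θ‖ ^ 2
          + ‖tauFst k ψ₃ ψ₄ θ - (1 / 2) * ψ₃ θ‖ ^ 2
          + ‖tauSnd k ψ₃ ψ₄ θ - (1 / 2) * ψ₄ θ‖ ^ 2))
    = (∫ θ in Ioo 0 ω,
        (‖deriv ψ₁ θ‖ ^ 2 + ‖deriv ψ₂ θ‖ ^ 2 + ‖deriv ψ₃ θ‖ ^ 2 + ‖deriv ψ₄ θ‖ ^ 2))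
      + (∫ θ in Ioo 0 ω,
          ((k : ℝ) + 1 / 2) * (((k : ℝ) + 1 / 2) - 1) / Real.sin θ ^ 2
            * (‖ψ₁ θ‖ ^ 2 + ‖ψ₃ θ‖ ^ 2))
      + (∫ θ in Ioo 0 ω,
          ((k : ℝ) + 1 / 2) * (((k : ℝ) + 1 / 2) + 1) / Real.sin θ ^ 2
            * (‖ψ₂ θ‖ ^ 2 + ‖ψ₄ θ‖ ^ 2)) := by
  obtain ⟨h1, h2, h3, h4, hc1, hs1, hc2, hs2, hc3, hs3, hc4, hs4, hb1, hb2⟩ := hψ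
  have hω0 : (0:ℝ) < ω := hω.1
  have hωπ : ω < π := hω.2
  have hsinω : Real.sin ω ≠ 0 := ne_of_gt (Real.sin_pos_of_pos_of_lt_pi hω0 hωπ)
  -- the support bound
  set K : Set ℝ := tsupport ψ₁ ∪ tsupport ψ₂ ∪ tsupport ψ₃ ∪ tsupport ψ₄ with hK
  have hKsub : K ⊆ Ioc 0 ω :=
    union_subset (union_subset (union_subset hs1 hs2) hs3) hs4
  have hKclosed : IsClosed K :=
    (((isClosed_tsupport ψ₁).union (isClosed_tsupport ψ₂)).union (isClosed_tsupport ψ₃)).union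
      (isClosed_tsupport ψ₄)
  have h0K : (0:ℝ) ∉ K := fun h => lt_irrefl 0 (hKsub h).1
  obtain ⟨ε, hε, hball⟩ :=
    Metric.mem_nhds_iff.mp (hKclosed.isOpen_compl.mem_nhds h0K)
  set a : ℝ := min (ε / 2) (ω / 2) with ha
  have ha0 : 0 < a := lt_min (by linarith) (by linarith)
  have haω : a < ω := lt_of_le_of_lt (min_le_right _ _) (by linarith)
  have haε : a < ε := lt_of_le_of_lt (min_le_left _ _) (by linarith)
  have hnotK : ∀ θ : ℝ, θ < ε → θ ∉ K := by
    intro θ hθ hmem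
    have h0θ : 0 < θ := (hKsub hmem).1
    have : θ ∈ Metric.ball (0:ℝ) ε := by
      simp only [Metric.mem_ball, Real.dist_eq, sub_zero, abs_of_pos h0θ]
      exact hθ
    exact hball this hmem
  have hz1 : ∀ θ : ℝ, θ < ε → ψ₁ θ = 0 := fun θ hθ =>
    image_eq_zero_of_notMem_tsupport
      (fun hm => hnotK θ hθ (mem_union_left _ (mem_union_left _ (mem_union_left _ hm))))
  have hz2 : ∀ θ : ℝ, θ < ε → ψ₂ θ = 0 := fun θ hθ =>
    image_eq_zero_of_notMem_tsupport
      (fun hm => hnotK θ hθ (mem_union_left _ (mem_union_left _ (mem_union_right _ hm))))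
  have hz3 : ∀ θ : ℝ, θ < ε → ψ₃ θ = 0 := fun θ hθ =>
    image_eq_zero_of_notMem_tsupport
      (fun hm => hnotK θ hθ (mem_union_left _ (mem_union_right _ hm)))
  have hz4 : ∀ θ : ℝ, θ < ε → ψ₄ θ = 0 := fun θ hθ =>
    image_eq_zero_of_notMem_tsupport (fun hm => hnotK θ hθ (mem_union_right _ hm))
  have hderiv_zero : ∀ (f : ℝ → ℂ), (∀ θ : ℝ, θ < ε → f θ = 0) →
      ∀ θ : ℝ, θ < ε → deriv f θ = 0 := by
    intro f hf θ hθ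
    have hev : f =ᶠ[nhds θ] (fun _ => (0:ℂ)) :=
      Filter.eventuallyEq_of_mem (Iio_mem_nhds hθ) (fun y hy => hf y hy)
    rw [hev.deriv_eq]
    exact deriv_const θ 0
  have hd1 := hderiv_zero ψ₁ hz1
  have hd2 := hderiv_zero ψ₂ hz2
  have hd3 := hderiv_zero ψ₃ hz3
  have hd4 := hderiv_zero ψ₄ hz4
  -- density functions
  set L : ℝ → ℝ := fun θ =>
      ‖tauFst k ψ₁ ψ₂ θ - (1 / 2) * ψ₁ θ‖ ^ 2 + ‖tauSnd k ψ₁ ψ₂ θ - (1 / 2) * ψ₂ θ‖ ^ 2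
        + ‖tauFst k ψ₃ ψ₄ θ - (1 / 2) * ψ₃ θ‖ ^ 2 + ‖tauSnd k ψ₃ ψ₄ θ - (1 / 2) * ψ₄ θ‖ ^ 2
    with hL
  set R1 : ℝ → ℝ := fun θ =>
      ‖deriv ψ₁ θ‖ ^ 2 + ‖deriv ψ₂ θ‖ ^ 2 + ‖deriv ψ₃ θ‖ ^ 2 + ‖deriv ψ₄ θ‖ ^ 2 with hR1
  set R2 : ℝ → ℝ := fun θ =>
      ((k : ℝ) + 1 / 2) * (((k : ℝ) + 1 / 2) - 1) / Real.sin θ ^ 2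
        * (‖ψ₁ θ‖ ^ 2 + ‖ψ₃ θ‖ ^ 2) with hR2
  set R3 : ℝ → ℝ := fun θ =>
      ((k : ℝ) + 1 / 2) * (((k : ℝ) + 1 / 2) + 1) / Real.sin θ ^ 2
        * (‖ψ₂ θ‖ ^ 2 + ‖ψ₄ θ‖ ^ 2) with hR3
  -- vanishing of the densities below ε
  have hLz : ∀ θ : ℝ, θ < ε → L θ = 0 := by
    intro θ hθ
    simp [hL, tauFst, tauSnd, hz1 θ hθ, hz2 θ hθ, hz3 θ hθ, hz4 θ hθ,
      hd1 θ hθ, hd2 θ hθ, hd3 θ hθ, hd4 θ hθ]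
  have hR1z : ∀ θ : ℝ, θ < ε → R1 θ = 0 := by
    intro θ hθ
    simp [hR1, hd1 θ hθ, hd2 θ hθ, hd3 θ hθ, hd4 θ hθ]
  have hR2z : ∀ θ : ℝ, θ < ε → R2 θ = 0 := by
    intro θ hθ
    simp [hR2, hz1 θ hθ, hz3 θ hθ]
  have hR3z : ∀ θ : ℝ, θ < ε → R3 θ = 0 := by
    intro θ hθ
    simp [hR3, hz2 θ hθ, hz4 θ hθ]
  -- reduce set integrals over Ioo 0 ω to interval integrals over [a, ω]
  have red : ∀ h : ℝ → ℝ, (∀ θ : ℝ, θ < ε → h θ = 0) →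
      ∫ θ in Ioo 0 ω, h θ = ∫ θ in a..ω, h θ := by
    intro h hh
    rw [intervalIntegral.integral_of_le haω.le, integral_Ioc_eq_integral_Ioo]
    have hred := setIntegral_eq_of_subset_of_forall_diff_eq_zero (μ := volume) (f := h)
      (t := Ioo 0 ω) (s := Ioo a ω) measurableSet_Ioo
      (Ioo_subset_Ioo ha0.le le_rfl) ?_
    · rw [hred]
    · intro θ hθ
      apply hh
      rcases hθ with ⟨hθ1, hθ2⟩
      by_cases hle : a < θ
      · exact absurd ⟨hle, hθ1.2⟩ hθ2
      · push_neg at hle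
        exact lt_of_le_of_lt hle haε
  -- basic facts on [a, ω]
  have hIccsub : Icc a ω ⊆ Ioc 0 ω := fun θ hθ => ⟨lt_of_lt_of_le ha0 hθ.1, hθ.2⟩
  have hsinIcc : ∀ θ ∈ Icc a ω, Real.sin θ ≠ 0 := fun θ hθ =>
    ne_of_gt (Real.sin_pos_of_pos_of_lt_pi (lt_of_lt_of_le ha0 hθ.1)
      (lt_of_le_of_lt hθ.2 hωπ))
  -- substitute derivWithin
  set D1 : ℝ → ℂ := derivWithin ψ₁ (Ioc 0 ω) with hD1
  set D2 : ℝ → ℂ := derivWithin ψ₂ (Ioc 0 ω) with hD2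
  set D3 : ℝ → ℂ := derivWithin ψ₃ (Ioc 0 ω) with hD3
  set D4 : ℝ → ℂ := derivWithin ψ₄ (Ioc 0 ω) with hD4
  have hDeq : ∀ (f : ℝ → ℂ), ∀ θ ∈ Ioo (0:ℝ) ω,
      derivWithin f (Ioc 0 ω) θ = deriv f θ := by
    intro f θ hθ
    exact derivWithin_of_mem_nhds (Ioc_mem_nhds_iff.mpr hθ)
  have hcontψ : ∀ (f : ℝ → ℂ), ContDiffOn ℝ (⊤ : ℕ∞) f (Ioc 0 ω) →
      ContinuousOn f (Icc a ω) := fun f hf => hf.continuousOn.mono hIccsub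
  have hcontD : ∀ (f : ℝ → ℂ), ContDiffOn ℝ (⊤ : ℕ∞) f (Ioc 0 ω) →
      ContinuousOn (derivWithin f (Ioc 0 ω)) (Icc a ω) := fun f hf =>
    (hf.continuousOn_derivWithin (uniqueDiffOn_Ioc 0 ω) (by simp)).mono hIccsub
  have hcont1 := hcontψ ψ₁ h1
  have hcont2 := hcontψ ψ₂ h2
  have hcont3 := hcontψ ψ₃ h3
  have hcont4 := hcontψ ψ₄ h4
  have hcontD1 := hcontD ψ₁ h1
  have hcontD2 := hcontD ψ₂ h2
  have hcontD3 := hcontD ψ₃ h3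
  have hcontD4 := hcontD ψ₄ h4
  have hcontcot : ContinuousOn (fun θ => Real.cos θ / Real.sin θ) (Icc a ω) :=
    ContinuousOn.div Real.continuous_cos.continuousOn Real.continuous_sin.continuousOn hsinIcc
  have hcontinv : ContinuousOn (fun θ => 1 / Real.sin θ ^ 2) (Icc a ω) :=
    ContinuousOn.div continuousOn_const
      ((Real.continuous_sin.continuousOn).pow 2)
      (fun θ hθ => pow_ne_zero 2 (hsinIcc θ hθ))
  -- integrability of the four densities on [a, ω]
  have hnormsq : ∀ (f : ℝ → ℂ), ContinuousOn f (Icc a ω) →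
      ContinuousOn (fun θ => ‖f θ‖ ^ 2) (Icc a ω) := fun f hf => (hf.norm).pow 2
  have hintR2 : IntervalIntegrable R2 volume a ω := by
    apply ContinuousOn.intervalIntegrable
    rw [uIcc_of_le haω.le]
    exact (ContinuousOn.div continuousOn_const ((Real.continuous_sin.continuousOn).pow 2)
      (fun θ hθ => pow_ne_zero 2 (hsinIcc θ hθ))).mul
      ((hnormsq ψ₁ hcont1).add (hnormsq ψ₃ hcont3))
  have hintR3 : IntervalIntegrable R3 volume a ω := by
    apply ContinuousOn.intervalIntegrable
    rw [uIcc_of_le haω.le]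
    exact (ContinuousOn.div continuousOn_const ((Real.continuous_sin.continuousOn).pow 2)
      (fun θ hθ => pow_ne_zero 2 (hsinIcc θ hθ))).mul
      ((hnormsq ψ₂ hcont2).add (hnormsq ψ₄ hcont4))
  -- surrogate continuous versions of L and R1 using derivWithin
  have hintaux : ∀ (F G : ℝ → ℝ), ContinuousOn G (Icc a ω) →
      (∀ θ ∈ Ioo a ω, G θ = F θ) → IntervalIntegrable F volume a ω := by
    intro F G hG hFG
    rw [intervalIntegrable_iff_integrableOn_Ioo_of_le haω.le]
    exact ((hG.integrableOn_Icc).mono_set Ioo_subset_Icc_self).congr_fun hFG measurableSet_Ioo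
  have hintR1 : IntervalIntegrable R1 volume a ω := by
    apply hintaux R1 (fun θ => ‖D1 θ‖ ^ 2 + ‖D2 θ‖ ^ 2 + ‖D3 θ‖ ^ 2 + ‖D4 θ‖ ^ 2)
    · exact (((hnormsq D1 hcontD1).add (hnormsq D2 hcontD2)).add (hnormsq D3 hcontD3)).add
        (hnormsq D4 hcontD4)
    · intro θ hθ
      have hθ' : θ ∈ Ioo (0:ℝ) ω := ⟨lt_trans ha0 hθ.1, hθ.2⟩
      simp only [hR1, hD1, hD2, hD3, hD4, hDeq ψ₁ θ hθ', hDeq ψ₂ θ hθ',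
        hDeq ψ₃ θ hθ', hDeq ψ₄ θ hθ']
  have hintL : IntervalIntegrable L volume a ω := by
    apply hintaux L (fun θ =>
      ‖((k : ℂ) + 1) * ψ₁ θ - D2 θ
          - ((k : ℂ) + 1 / 2) * ((Real.cos θ / Real.sin θ : ℝ) : ℂ) * ψ₂ θ
          - (1 / 2) * ψ₁ θ‖ ^ 2
        + ‖D1 θ - ((k : ℂ) + 1 / 2) * ((Real.cos θ / Real.sin θ : ℝ) : ℂ) * ψ₁ θ
            - (k : ℂ) * ψ₂ θ - (1 / 2) * ψ₂ θ‖ ^ 2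
        + ‖((k : ℂ) + 1) * ψ₃ θ - D4 θ
            - ((k : ℂ) + 1 / 2) * ((Real.cos θ / Real.sin θ : ℝ) : ℂ) * ψ₄ θ
            - (1 / 2) * ψ₃ θ‖ ^ 2
        + ‖D3 θ - ((k : ℂ) + 1 / 2) * ((Real.cos θ / Real.sin θ : ℝ) : ℂ) * ψ₃ θ
            - (k : ℂ) * ψ₄ θ - (1 / 2) * ψ₄ θ‖ ^ 2)
    · have hcotC : ContinuousOn (fun θ => (((Real.cos θ / Real.sin θ : ℝ)) : ℂ)) (Icc a ω) :=
        Complex.continuous_ofReal.comp_continuousOn hcontcot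
      apply ContinuousOn.add
      apply ContinuousOn.add
      apply ContinuousOn.add
      · exact ContinuousOn.pow (ContinuousOn.norm ((((continuousOn_const.mul hcont1).sub
          hcontD2).sub ((continuousOn_const.mul hcotC).mul hcont2)).sub
          (continuousOn_const.mul hcont1))) 2
      · exact ContinuousOn.pow (ContinuousOn.norm (((hcontD1.sub
          ((continuousOn_const.mul hcotC).mul hcont1)).sub
          (continuousOn_const.mul hcont2)).sub (continuousOn_const.mul hcont2))) 2
      · exact ContinuousOn.pow (ContinuousOn.norm ((((continuousOn_const.mul hcont3).sub
          hcontD4).sub ((continuousOn_const.mul hcotC).mul hcont4)).sub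
          (continuousOn_const.mul hcont3))) 2
      · exact ContinuousOn.pow (ContinuousOn.norm (((hcontD3.sub
          ((continuousOn_const.mul hcotC).mul hcont3)).sub
          (continuousOn_const.mul hcont4)).sub (continuousOn_const.mul hcont4))) 2
    · intro θ hθ
      have hθ' : θ ∈ Ioo (0:ℝ) ω := ⟨lt_trans ha0 hθ.1, hθ.2⟩
      simp only [hL, tauFst, tauSnd, hD1, hD2, hD3, hD4, hDeq ψ₁ θ hθ', hDeq ψ₂ θ hθ',
        hDeq ψ₃ θ hθ', hDeq ψ₄ θ hθ']
  -- the total boundary functional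
  set F : ℝ → ℝ := fun θ =>
      Fb ((k : ℝ) + 1 / 2) ψ₁ ψ₂ θ + Fb ((k : ℝ) + 1 / 2) ψ₃ ψ₄ θ with hF
  have hFa : F a = 0 := by
    simp [hF, Fb, hz1 a haε, hz2 a haε, hz3 a haε, hz4 a haε]
  have hFω : F ω = 0 := by
    have hsc : Real.cos ω ^ 2 + Real.sin ω ^ 2 = 1 := by
      nlinarith [Real.sin_sq_add_cos_sq ω]
    have hb := boundary_zero (Real.sin ω) (Real.cos ω) hsc (ψ₃ ω) (ψ₄ ω) (ψ₁ ω) (ψ₂ ω) hb1 hb2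
    have key : ∀ β X1 X2 X3 X4 Y1 Y2 : ℝ,
        Real.cos ω * ((X2 - X1) + (X4 - X3)) - 2 * Real.sin ω * (Y1 + Y2) = 0 →
        β * (Real.cos ω / Real.sin ω) * (X2 - X1) - 2 * β * Y1
          + (β * (Real.cos ω / Real.sin ω) * (X4 - X3) - 2 * β * Y2) = 0 := by
      intro β X1 X2 X3 X4 Y1 Y2 hh
      field_simp
      linear_combination β * hh
    simp only [hF, Fb]
    exact key _ (‖ψ₁ ω‖ ^ 2) (‖ψ₂ ω‖ ^ 2) (‖ψ₃ ω‖ ^ 2) (‖ψ₄ ω‖ ^ 2) _ _ hb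
  have hcontF : ContinuousOn F (Icc a ω) := by
    have hre : ∀ (f g : ℝ → ℂ), ContinuousOn f (Icc a ω) → ContinuousOn g (Icc a ω) →
        ContinuousOn (fun θ => ((starRingEnd ℂ) (f θ) * g θ).re) (Icc a ω) := by
      intro f g hf hg
      exact Complex.continuous_re.comp_continuousOn
        ((Complex.continuous_conj.comp_continuousOn hf).mul hg)
    apply ContinuousOn.add
    · exact ((continuousOn_const.mul hcontcot).mul
        ((hnormsq ψ₂ hcont2).sub (hnormsq ψ₁ hcont1))).sub
        (continuousOn_const.mul (hre ψ₁ ψ₂ hcont1 hcont2))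
    · exact ((continuousOn_const.mul hcontcot).mul
        ((hnormsq ψ₄ hcont4).sub (hnormsq ψ₃ hcont3))).sub
        (continuousOn_const.mul (hre ψ₃ ψ₄ hcont3 hcont4))
  have hHD : ∀ x ∈ Ioo a ω, HasDerivAt F (L x - (R1 x + R2 x + R3 x)) x := by
    intro x hx
    have hx' : x ∈ Ioo (0:ℝ) ω := ⟨lt_trans ha0 hx.1, hx.2⟩
    have hsinx : Real.sin x ≠ 0 :=
      ne_of_gt (Real.sin_pos_of_pos_of_lt_pi hx'.1 (lt_trans hx'.2 hωπ))
    have hmem : Ioc (0:ℝ) ω ∈ nhds x := Ioc_mem_nhds_iff.mpr hx'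
    have hdiff : ∀ (f : ℝ → ℂ), ContDiffOn ℝ (⊤ : ℕ∞) f (Ioc 0 ω) →
        HasDerivAt f (deriv f x) x := by
      intro f hf
      exact ((hf.contDiffAt hmem).differentiableAt (by simp)).hasDerivAt
    have hp1 := DQF.pair_deriv k ψ₁ ψ₂ x hsinx (hdiff ψ₁ h1) (hdiff ψ₂ h2)
    have hp2 := DQF.pair_deriv k ψ₃ ψ₄ x hsinx (hdiff ψ₃ h3) (hdiff ψ₄ h4)
    have := hp1.add hp2
    refine this.congr_deriv ?_
    simp only [L, R1, R2, R3]
    ring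
  have hint : IntervalIntegrable (fun θ => L θ - (R1 θ + R2 θ + R3 θ)) volume a ω :=
    hintL.sub ((hintR1.add hintR2).add hintR3)
  have hFTC : ∫ θ in a..ω, (L θ - (R1 θ + R2 θ + R3 θ)) = F ω - F a :=
    intervalIntegral.integral_eq_sub_of_hasDerivAt_of_le haω.le hcontF hHD hint
  have hzero : ∫ θ in a..ω, (L θ - (R1 θ + R2 θ + R3 θ)) = 0 := by
    rw [hFTC, hFa, hFω]; ring
  have hsplit : ∫ θ in a..ω, L θ
      = (∫ θ in a..ω, R1 θ) + (∫ θ in a..ω, R2 θ) + (∫ θ in a..ω, R3 θ) := by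
    have h := intervalIntegral.integral_sub hintL ((hintR1.add hintR2).add hintR3)
    rw [hzero] at h
    have h2 := intervalIntegral.integral_add (hintR1.add hintR2) hintR3
    have h3 := intervalIntegral.integral_add hintR1 hintR2
    have := h.symm
    rw [h2, h3] at this
    linarith [this]
  calc ∫ θ in Ioo 0 ω, L θ = ∫ θ in a..ω, L θ := red L hLz
    _ = (∫ θ in a..ω, R1 θ) + (∫ θ in a..ω, R2 θ) + (∫ θ in a..ω, R3 θ) := hsplit
    _ = (∫ θ in Ioo 0 ω, R1 θ) + (∫ θ in Ioo 0 ω, R2 θ) + (∫ θ in Ioo 0 ω, R3 θ) := by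
        rw [red R1 hR1z, red R2 hR2z, red R3 hR3z]

end
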